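/- arXiv:1307.5605 — 6 statements merged into one kernel-verified Lean document; each statement's English description precedes it below -/
import Mathlib

section
/- Let R be a commutative ring of prime characteristic p and let f ∈ R[[T]]. Then f(X+Y) = f(X) + f(Y) holds in R[[X,Y]] if and only if the coefficient of T^n in f vanishes for every n ≥ 0 that is not a power of p. Equivalently, the endomorphisms of the additive formal group over R are exactly the series ∑_{i≥0} b_i T^{p^i}, i.e., the 'twisted power series in Frobenius' ring B{{Fr_p}}. -/
/-- Substitution of a multivariate power series `g` (intended to have zero constant
coefficient) into a one-variable power series `f`, i.e. `f(g) = ∑ₙ (coeffₙ f) · gⁿ`.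
Each coefficient of the result is given by the finite truncated sum, which agrees with
the genuine substitution whenever `g` has zero constant coefficient (since then the
coefficient of a monomial `d` in `gⁿ` vanishes for `n` larger than the total degree
of `d`). -/
noncomputable def PowerSeries.substMv {σ R : Type*} [CommRing R]
    (g : MvPowerSeries σ R) (f : PowerSeries R) : MvPowerSeries σ R :=
  fun d => ∑ n ∈ Finset.range (d.sum (fun _ e => e) + 1),
    PowerSeries.coeff n f * MvPowerSeries.coeff d (g ^ n)

/-!
Comparing the coefficient of `X^a Y^b` on both sides, `f(X + Y) = f(X) + f(Y)` says exactly
that `f` has no constant term and that `(n choose i) · aₙ = 0` whenever `0 < i < n`. In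
characteristic `p` the binomial coefficients `(n choose i)`, `0 < i < n`, all vanish precisely
when `n` is a power of `p` (Kummer/Lucas); otherwise one of them is a unit, which forces `aₙ = 0`.
-/

theorem Nat.exists_eq_pow_iff_forall_dvd_choose {p n : ℕ} (hp : p.Prime) (hn : 0 < n) :
    (∃ k, n = p ^ k) ↔ ∀ i, 0 < i → i < n → p ∣ n.choose i := by
  constructor
  · rintro ⟨k, rfl⟩ i hi hin
    exact hp.dvd_choose_pow hi.ne' hin.ne
  · intro h
    have := Fact.mk hp
    refine ⟨multiplicity p n, Choose.eq_pow_multiplicity_of_choose_modEq_zero_nat hn ?_⟩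
    intro i hi
    rw [Finset.mem_Icc] at hi
    exact Nat.modEq_zero_iff_dvd.2 (h i hi.1 (by omega))

theorem CharP.forall_natCast_choose_mul_eq_zero_iff {R : Type*} [CommRing R] {p n : ℕ}
    [CharP R p] (hp : p.Prime) (hn : 0 < n) (c : R) :
    (∀ i, 0 < i → i < n → (n.choose i : R) * c = 0) ↔ (∃ k, n = p ^ k) ∨ c = 0 := by
  rw [Nat.exists_eq_pow_iff_forall_dvd_choose hp hn]
  constructor
  · intro h
    refine or_iff_not_imp_left.2 fun hndvd => ?_
    push Not at hndvd
    obtain ⟨i, hi, hin, hi_ndvd⟩ := hndvd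
    exact ((CharP.isUnit_natCast_iff hp).2 hi_ndvd).mul_right_eq_zero.1 (h i hi hin)
  · rintro (hdvd | rfl) i hi hin
    · rw [(CharP.cast_eq_zero_iff R p _).2 (hdvd i hi hin), zero_mul]
    · exact mul_zero _

namespace PowerSeries

open MvPowerSeries Finset Finsupp

variable {R : Type*} [CommRing R]

theorem coeff_substMv {σ : Type*} (g : MvPowerSeries σ R) (f : R⟦X⟧) (d : σ →₀ ℕ) :
    MvPowerSeries.coeff d (substMv g f)
      = ∑ n ∈ range (d.sum (fun _ e => e) + 1), coeff n f * MvPowerSeries.coeff d (g ^ n) :=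
  rfl

theorem coeff_substMv_X {σ : Type*} [DecidableEq σ] (i : σ) (f : R⟦X⟧) (d : σ →₀ ℕ) :
    MvPowerSeries.coeff d (substMv (MvPowerSeries.X i) f)
      = if d = single i (d i) then coeff (d i) f else 0 := by
  rw [coeff_substMv]
  split_ifs with hd
  · obtain ⟨m, rfl⟩ : ∃ m, d = single i m := ⟨_, hd⟩
    simp [MvPowerSeries.coeff_X_pow, sum_single_index, (single_injective i).eq_iff]
  · refine sum_eq_zero fun n _ => ?_
    rw [MvPowerSeries.coeff_X_pow, if_neg fun h => hd (by rw [h, single_eq_same]), mul_zero]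

theorem coeff_substMv_X_zero_add_X_one (f : R⟦X⟧) (e : Fin 2 →₀ ℕ) :
    MvPowerSeries.coeff e (substMv (MvPowerSeries.X 0 + MvPowerSeries.X 1) f)
      = (e 0 + e 1).choose (e 0) * coeff (e 0 + e 1) f := by
  simp_rw [coeff_substMv, ← MvPolynomial.coe_X, ← MvPolynomial.coe_add,
    ← MvPolynomial.coe_pow, MvPolynomial.coeff_coe, MvPolynomial.coeff_add_pow,
    HasAntidiagonal.mem_antidiagonal]
  simp [sum_fintype, mul_comm]

theorem substMv_X_zero_add_X_one_eq_add_iff (f : R⟦X⟧) :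
    substMv (MvPowerSeries.X 0 + MvPowerSeries.X 1 : MvPowerSeries (Fin 2) R) f
        = substMv (MvPowerSeries.X 0) f + substMv (MvPowerSeries.X 1) f ↔
      ∀ a b : ℕ, ((a + b).choose a : R) * coeff (a + b) f
        = (if b = 0 then coeff a f else 0) + (if a = 0 then coeff b f else 0) := by
  have hsingle : ∀ e : Fin 2 →₀ ℕ,
      (e = single 0 (e 0) ↔ e 1 = 0) ∧ (e = single 1 (e 1) ↔ e 0 = 0) := fun e => by
    simp [Finsupp.ext_iff, Fin.forall_fin_two]
  simp only [MvPowerSeries.ext_iff, map_add, coeff_substMv_X_zero_add_X_one, coeff_substMv_X,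
    hsingle]
  constructor
  · intro h a b
    obtain ⟨e, rfl, rfl⟩ : ∃ e : Fin 2 →₀ ℕ, e 0 = a ∧ e 1 = b :=
      ⟨single 0 a + single 1 b, by simp, by simp⟩
    exact h e
  · exact fun h e => h (e 0) (e 1)

theorem substMv_X_zero_add_X_one_eq_add_iff_choose (f : R⟦X⟧) :
    substMv (MvPowerSeries.X 0 + MvPowerSeries.X 1 : MvPowerSeries (Fin 2) R) f
        = substMv (MvPowerSeries.X 0) f + substMv (MvPowerSeries.X 1) f ↔
      coeff 0 f = 0 ∧ ∀ n, 0 < n → ∀ i, 0 < i → i < n → (n.choose i : R) * coeff n f = 0 := by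
  rw [substMv_X_zero_add_X_one_eq_add_iff]
  constructor
  · intro h
    refine ⟨by simpa using h 0 0, fun n _ i hi hin => ?_⟩
    simpa [hi.ne', (Nat.sub_pos_of_lt hin).ne', Nat.add_sub_cancel' hin.le] using h i (n - i)
  · rintro ⟨h0, h⟩ a b
    rcases a.eq_zero_or_pos with rfl | ha <;> rcases b.eq_zero_or_pos with rfl | hb
    · simp [h0]
    · simp [hb.ne']
    · simp [ha.ne']
    · simpa [ha.ne', hb.ne'] using h (a + b) (by omega) a ha (by omega)

end PowerSeries

/-- Over a commutative ring `R` of prime characteristic `p`, a power series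
`f ∈ R[[T]]` satisfies `f(X + Y) = f(X) + f(Y)` in `R[[X,Y]]` if and only if the
coefficient of `Tⁿ` in `f` vanishes for every `n` that is not a power of `p`:
the endomorphisms of the additive formal group over `R` are exactly the series
`∑ᵢ bᵢ T^(pⁱ)`, i.e. the twisted power series in Frobenius. -/
theorem additive_powerSeries_iff_support_prime_powers {R : Type*} [CommRing R]
    (p : ℕ) [Fact p.Prime] [CharP R p] (f : PowerSeries R) :
    (PowerSeries.substMv
          (MvPowerSeries.X 0 + MvPowerSeries.X 1 : MvPowerSeries (Fin 2) R) f
        = PowerSeries.substMv (MvPowerSeries.X 0 : MvPowerSeries (Fin 2) R) f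
          + PowerSeries.substMv (MvPowerSeries.X 1 : MvPowerSeries (Fin 2) R) f)
      ↔ ∀ n : ℕ, (∀ k : ℕ, n ≠ p ^ k) → PowerSeries.coeff n f = 0 := by
  have hp : p.Prime := Fact.out
  rw [PowerSeries.substMv_X_zero_add_X_one_eq_add_iff_choose]
  constructor
  · rintro ⟨h0, h⟩ n hn
    rcases n.eq_zero_or_pos with rfl | hpos
    · exact h0
    · exact ((CharP.forall_natCast_choose_mul_eq_zero_iff hp hpos _).1 (h n hpos)).resolve_left
        (not_exists.2 hn)
  · intro h
    refine ⟨h 0 fun k => (pow_pos hp.pos k).ne, fun n hpos => ?_⟩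
    refine (CharP.forall_natCast_choose_mul_eq_zero_iff hp hpos _).2 ?_
    exact or_iff_not_imp_left.2 fun hpow => h n (not_exists.1 hpow)
end

section
/- Let R be a commutative ring and let F ∈ R[[X,Y]] satisfy F(X,0) = X and F(0,Y) = Y (substituting 0 for one variable). Then there exists a unique power series i ∈ R[[T]] with zero constant term such that F(T, i(T)) = 0. (Existence and uniqueness of the formal inverse i_G for a formal group law G, property G₃.) -/
/-- Substitution of two power series `u`, `v` (intended to have zero constant
coefficient) into a two-variable power series `F ∈ R[[X,Y]]`, i.e.
`F(u,v) = ∑_{i,j} (coeff_{(i,j)} F) · uⁱ · vʲ`.  Each coefficient of the result is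
given by the finite truncated sum, which agrees with the genuine substitution whenever
`u` and `v` have zero constant coefficient. -/
noncomputable def MvPowerSeries.subst2 {τ R : Type*} [CommRing R]
    (u v : MvPowerSeries τ R) (F : MvPowerSeries (Fin 2) R) : MvPowerSeries τ R :=
  fun d =>
    ∑ ij ∈ Finset.range (d.sum (fun _ e => e) + 1) ×ˢ
        Finset.range (d.sum (fun _ e => e) + 1),
      MvPowerSeries.coeff (Finsupp.single 0 ij.1 + Finsupp.single 1 ij.2) F *
        MvPowerSeries.coeff d (u ^ ij.1 * v ^ ij.2)

/-! If `X ∣ g`, then in degree `n` of `F(X, g) = ∑ F_{ij} Xⁱ gʲ` every monomial other than `Y`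
sees only `g mod Xⁿ`, so the `n`-th coefficient of `F(X, g)` is `F_{01} · gₙ` plus a function of
`g₀, …, gₙ₋₁`. As `F(0, Y) = Y` gives `F_{00} = 0` and `F_{01} = 1`, the equation `F(X, i) = 0`
determines the coefficients of `i` one by one. -/

theorem pow_add_dvd_pow_succ_sub_pow_succ {R : Type*} [CommRing R] {x a b : R} {n : ℕ}
    (ha : x ∣ a) (hb : x ∣ b) (hab : x ^ n ∣ a - b) (j : ℕ) :
    x ^ (n + j) ∣ a ^ (j + 1) - b ^ (j + 1) := by
  rw [← geom_sum₂_mul, add_comm n j, pow_add]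
  refine mul_dvd_mul (Finset.dvd_sum fun i hi => ?_) hab
  rw [Finset.mem_range] at hi
  rw [show j + 1 - 1 - i = j - i by omega, ← pow_mul_pow_sub x (show i ≤ j by omega)]
  exact mul_dvd_mul (pow_dvd_pow_of_dvd ha i) (pow_dvd_pow_of_dvd hb (j - i))

namespace MvPowerSeries

variable {τ R : Type*} [CommRing R]

theorem constantCoeff_subst2 (u v : MvPowerSeries τ R) (F : MvPowerSeries (Fin 2) R) :
    constantCoeff (subst2 u v F) = constantCoeff F := by
  show subst2 u v F 0 = _
  simp [subst2]

theorem coeff_single_subst2_zero_X (F : MvPowerSeries (Fin 2) R) (s : τ) (k : ℕ) :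
    coeff (Finsupp.single s k) (subst2 0 (X s) F) = coeff (Finsupp.single 1 k) F := by
  classical
  show subst2 0 (X s) F (Finsupp.single s k) = _
  simp only [subst2, Finsupp.sum_single_index]
  rw [Finset.sum_eq_single_of_mem ((0 : ℕ), k) (by simp)]
  · simp [X_pow_eq]
  · rintro ⟨i, j⟩ - hij
    rcases Nat.eq_zero_or_pos i with rfl | hi
    · have hjk : Finsupp.single s k ≠ Finsupp.single s j :=
        fun h => hij (by rw [Finsupp.single_injective s h])
      simp [coeff_X_pow, hjk]
    · simp [zero_pow hi.ne']

end MvPowerSeries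

namespace PowerSeries

variable {R : Type*} [CommRing R]

/-- The `n`-th coefficient of `Φ g` is `a • gₙ` plus a function of `g₀, …, gₙ₋₁`. -/
def IsTriangular (Φ : R⟦X⟧ → R⟦X⟧) (a : R) : Prop :=
  ∀ g g' : R⟦X⟧, constantCoeff g = 0 → constantCoeff g' = 0 → ∀ n : ℕ,
    (∀ k < n, coeff k g = coeff k g') →
      coeff n (Φ g) - coeff n (Φ g') = a * (coeff n g - coeff n g')

namespace IsTriangular

variable {Φ : R⟦X⟧ → R⟦X⟧} {a : R}

theorem injOn (hΦ : IsTriangular Φ a) (ha : IsLeftRegular a) :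
    Set.InjOn Φ {g | constantCoeff g = 0} := by
  intro g hg g' hg' h
  ext n
  induction n using Nat.strong_induction_on with
  | _ n ih =>
    refine sub_eq_zero.mp (ha (?_ : a * _ = a * 0))
    rw [mul_zero, ← hΦ g g' hg hg' n ih, h, sub_self]

variable (Φ a) in
/-- `gₙ₊₁` is chosen, given `g₀, …, gₙ`, to make the `(n + 1)`-st coefficients of `Φ g`
and `ψ` agree. -/
noncomputable def solutionCoeff (ψ : R⟦X⟧) : ℕ → R
  | 0 => 0
  | n + 1 => Ring.inverse a * (coeff (n + 1) ψ - coeff (n + 1)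
      (Φ (mk fun k => if k < n + 1 then solutionCoeff ψ k else 0)))

theorem exists_eq (hΦ : IsTriangular Φ a) (ha : IsUnit a) {ψ : R⟦X⟧}
    (hψ : constantCoeff (Φ 0) = constantCoeff ψ) :
    ∃ g, constantCoeff g = 0 ∧ Φ g = ψ := by
  have hc0 : solutionCoeff Φ a ψ 0 = 0 := by rw [solutionCoeff]
  have hc_succ (n : ℕ) : solutionCoeff Φ a ψ (n + 1) = Ring.inverse a * (coeff (n + 1) ψ -
      coeff (n + 1) (Φ (mk fun k => if k < n + 1 then solutionCoeff Φ a ψ k else 0))) := by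
    rw [solutionCoeff]
  set c := solutionCoeff Φ a ψ
  have htrunc (n : ℕ) : constantCoeff (mk fun k => if k < n then c k else 0) = 0 := by
    rw [← coeff_zero_eq_constantCoeff_apply, coeff_mk]
    split_ifs <;> simp [hc0]
  have hmk0 : constantCoeff (mk c) = 0 := by
    rw [← coeff_zero_eq_constantCoeff_apply, coeff_mk, hc0]
  refine ⟨mk c, hmk0, ext fun n => ?_⟩
  rcases n with _ | n
  · have key := hΦ (mk c) 0 hmk0 (map_zero _) 0 (by simp)
    simp only [coeff_zero_eq_constantCoeff_apply, hmk0, map_zero, sub_zero, mul_zero] at key ⊢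
    linear_combination key + hψ
  · have key := hΦ (mk c) _ hmk0 (htrunc (n + 1)) (n + 1) fun k hk => by
      rw [coeff_mk, coeff_mk, if_pos hk]
    simp only [coeff_mk, lt_irrefl, if_false, sub_zero] at key
    rw [hc_succ, Ring.mul_inverse_cancel_left a _ ha] at key
    linear_combination key

end IsTriangular

theorem coeff_subst2 (u v : R⟦X⟧) (F : MvPowerSeries (Fin 2) R) (n : ℕ) :
    coeff n (MvPowerSeries.subst2 u v F) =
      ∑ ij ∈ Finset.range (n + 1) ×ˢ Finset.range (n + 1),
        MvPowerSeries.coeff (Finsupp.single 0 ij.1 + Finsupp.single 1 ij.2) F *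
          coeff n (u ^ ij.1 * v ^ ij.2) := by
  show MvPowerSeries.subst2 u v F (Finsupp.single () n) = _
  simp only [MvPowerSeries.subst2, Finsupp.sum_single_index]
  rfl

theorem coeff_X_pow_mul_pow_eq {g g' : R⟦X⟧} {n : ℕ} (hg : X ∣ g) (hg' : X ∣ g')
    (hgg' : X ^ n ∣ g - g') {i j : ℕ} (hij : (i, j) ≠ (0, 1)) :
    coeff n (X ^ i * g ^ j) = coeff n (X ^ i * g' ^ j) := by
  rcases j with _ | j
  · rfl
  have hij : 1 ≤ i + j := by
    simp only [ne_eq, Prod.mk.injEq, Nat.add_eq_right] at hij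
    omega
  have hdvd : X ^ (n + 1) ∣ X ^ i * (g ^ (j + 1) - g' ^ (j + 1)) := by
    refine (pow_dvd_pow X (by omega : n + 1 ≤ i + (n + j))).trans ?_
    rw [pow_add]
    exact mul_dvd_mul_left _ (pow_add_dvd_pow_succ_sub_pow_succ hg hg' hgg' j)
  rw [← sub_eq_zero, ← map_sub, ← mul_sub]
  exact X_pow_dvd_iff.mp hdvd n (lt_add_one n)

theorem isTriangular_subst2_X (F : MvPowerSeries (Fin 2) R) :
    IsTriangular (fun g => MvPowerSeries.subst2 X g F)
      (MvPowerSeries.coeff (Finsupp.single 1 1) F) := by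
  intro g g' hg hg' n hgg'
  have hdvd : X ^ n ∣ g - g' := X_pow_dvd_iff.mpr fun k hk => by rw [map_sub, hgg' k hk, sub_self]
  simp only [coeff_subst2, ← Finset.sum_sub_distrib, ← mul_sub]
  rw [Finset.sum_eq_single (0, 1)]
  · simp
  · intro ij _ hij
    rw [coeff_X_pow_mul_pow_eq (X_dvd_iff.mpr hg) (X_dvd_iff.mpr hg') hdvd hij, sub_self, mul_zero]
  · intro h
    obtain rfl : n = 0 := by simpa using h
    simp [hg, hg']

end PowerSeries

theorem existsUnique_formal_inverse_general {R : Type*} [CommRing R]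
    (F : MvPowerSeries (Fin 2) R)
    (h2 : MvPowerSeries.subst2 0 (MvPowerSeries.X 1 : MvPowerSeries (Fin 2) R) F
        = MvPowerSeries.X 1) :
    ∃! i : PowerSeries R, PowerSeries.constantCoeff i = 0 ∧
      MvPowerSeries.subst2 (PowerSeries.X : PowerSeries R) i F = 0 := by
  have hF0 : MvPowerSeries.constantCoeff F = 0 := by
    simpa [MvPowerSeries.constantCoeff_subst2] using congrArg MvPowerSeries.constantCoeff h2
  have hF1 : MvPowerSeries.coeff (Finsupp.single 1 1) F = 1 := by
    simpa [MvPowerSeries.coeff_single_subst2_zero_X, MvPowerSeries.coeff_X] using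
      congrArg (MvPowerSeries.coeff (Finsupp.single 1 1)) h2
  have hΦ := PowerSeries.isTriangular_subst2_X F
  rw [hF1] at hΦ
  obtain ⟨i, hi0, hi⟩ := hΦ.exists_eq isUnit_one (ψ := 0)
    ((MvPowerSeries.constantCoeff_subst2 _ _ F).trans hF0)
  exact ⟨i, ⟨hi0, hi⟩, fun j ⟨hj0, hj⟩ =>
    hΦ.injOn isRegular_one.left hj0 hi0 (hj.trans hi.symm)⟩

/-- Let `F ∈ R[[X,Y]]` satisfy the unit axioms `F(X,0) = X` and `F(0,Y) = Y` of a
formal group law.  Then there exists a unique power series `i ∈ R[[T]]` with zero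
constant term such that `F(T, i(T)) = 0`: existence and uniqueness of the formal
inverse `i_G` (property `G₃`). -/
theorem existsUnique_formal_inverse {R : Type*} [CommRing R]
    (F : MvPowerSeries (Fin 2) R)
    (h1 : MvPowerSeries.subst2 (MvPowerSeries.X 0 : MvPowerSeries (Fin 2) R) 0 F
        = MvPowerSeries.X 0)
    (h2 : MvPowerSeries.subst2 0 (MvPowerSeries.X 1 : MvPowerSeries (Fin 2) R) F
        = MvPowerSeries.X 1) :
    ∃! i : PowerSeries R, PowerSeries.constantCoeff i = 0 ∧
      MvPowerSeries.subst2 (PowerSeries.X : PowerSeries R) i F = 0 :=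
  existsUnique_formal_inverse_general F h2
end

section
/- Let K be a field of characteristic zero and let f ∈ K[[T]] have zero constant term. Suppose f is an endomorphism of the multiplicative formal group, i.e., f(X + Y + XY) = f(X) + f(Y) + f(X)·f(Y) in K[[X,Y]], and suppose the coefficient of T in f equals 1. Then f = T. (Every normalized endomorphism of the formal multiplicative group over a field of characteristic zero is the identity; this is the one-dimensional, characteristic-zero core of Proposition 3.5.2.) -/
/-!
Write `f = ∑ aₙ Tⁿ`. Since `X + Y + XY = Y + X(1 + Y)`, modulo `X²` we have
`(X + Y + XY)ᵏ ≡ Yᵏ + k X Yᵏ⁻¹ (1 + Y)`, so the coefficient of `X Yᵐ` in `f(X + Y + XY)` is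
`(m + 1) aₘ₊₁ + m aₘ`, while in `f(X) + f(Y) + f(X) f(Y)` it is `a₁ aₘ` for `m ≥ 1`.
With `a₁ = 1` this gives `(m + 1) aₘ₊₁ = (1 - m) aₘ`: first `a₂ = 0`, and then, since
`m + 1 ≠ 0` in characteristic zero, every `aₙ` with `n ≥ 2` vanishes.
-/

open Finsupp
open PowerSeries (substMv)

namespace MvPowerSeries

variable {σ R : Type*} [CommRing R]

noncomputable def mulFormalGroupLaw (i j : σ) : MvPowerSeries σ R :=
  X i + X j + X i * X j

theorem coeff_substMv (g : MvPowerSeries σ R) (f : PowerSeries R) (d : σ →₀ ℕ) :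
    coeff d (substMv g f) =
      ∑ n ∈ Finset.range (d.degree + 1), PowerSeries.coeff n f * coeff d (g ^ n) :=
  rfl

theorem coeff_single_substMv_X (i : σ) (f : PowerSeries R) (n : ℕ) :
    coeff (single i n) (substMv (X i) f) = PowerSeries.coeff n f := by
  classical
  simp [coeff_substMv, coeff_X_pow, (single_injective i).eq_iff]

theorem coeff_substMv_X_eq_zero {i : σ} {d : σ →₀ ℕ} (hd : ∀ n, d ≠ single i n)
    (f : PowerSeries R) : coeff d (substMv (X i) f) = 0 := by
  classical
  simp [coeff_substMv, coeff_X_pow, hd]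

theorem coeff_substMv_X_mul_substMv_X {i j : σ} (hij : i ≠ j) (f g : PowerSeries R) (a b : ℕ) :
    coeff (single i a + single j b) (substMv (X i) f * substMv (X j) g) =
      PowerSeries.coeff a f * PowerSeries.coeff b g := by
  classical
  rw [coeff_mul, Finset.sum_eq_single (single i a, single j b)]
  · rw [coeff_single_substMv_X, coeff_single_substMv_X]
  · rintro ⟨p, q⟩ hpq hne
    by_cases hp : ∃ a', p = single i a'
    · by_cases hq : ∃ b', q = single j b'
      · obtain ⟨a', rfl⟩ := hp
        obtain ⟨b', rfl⟩ := hq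
        rw [Finset.HasAntidiagonal.mem_antidiagonal] at hpq
        have ha := DFunLike.congr_fun hpq i
        have hb := DFunLike.congr_fun hpq j
        simp [hij, hij.symm] at ha hb
        simp [ha, hb] at hne
      · push Not at hq
        rw [coeff_substMv_X_eq_zero hq, mul_zero]
    · push Not at hp
      rw [coeff_substMv_X_eq_zero hp, zero_mul]
  · simp

theorem coeff_single_add_single_mulFormalGroupLaw_pow {i j : σ} (hij : i ≠ j) (m k : ℕ) :
    coeff (single i 1 + single j m) ((mulFormalGroupLaw i j : MvPowerSeries σ R) ^ k) =
      k * ((if k = m + 1 then 1 else 0) + (if k = m then 1 else 0)) := by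
  classical
  obtain ⟨c, hc⟩ := Polynomial.binomExpansion (Polynomial.X ^ k) (X j : MvPowerSeries σ R)
    (X i * (1 + X j))
  simp only [Polynomial.eval_pow, Polynomial.eval_X, Polynomial.derivative_X_pow,
    Polynomial.eval_mul, Polynomial.eval_C] at hc
  have hlinear : (k : MvPowerSeries σ R) * X j ^ (k - 1) * (X i * (1 + X j)) =
      monomial (single i 1) 1 * (C (k : R) * (X j ^ (k - 1) + X j ^ (k - 1) * X j)) := by
    rw [← X_def, map_natCast]; ring
  have hquadratic :
      c * (X i * (1 + X j)) ^ 2 = monomial (single i 2) 1 * (c * (1 + X j) ^ 2) := by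
    rw [← X_pow_eq]; ring
  rw [show (mulFormalGroupLaw i j : MvPowerSeries σ R) = X j + X i * (1 + X j) by
      rw [mulFormalGroupLaw]; ring,
    hc, hlinear, hquadratic,
    map_add, map_add, coeff_X_pow, if_neg, coeff_add_monomial_mul, coeff_monomial_mul, if_neg,
    coeff_C_mul, ← pow_succ, map_add, coeff_X_pow, coeff_X_pow]
  · rcases k with _ | k
    · simp
    · simp only [(single_injective j).eq_iff]
      simp [eq_comm]
  · simp [single_le_iff, hij]
  · intro h
    simpa [hij] using DFunLike.congr_fun h i

theorem coeff_single_add_single_substMv_mulFormalGroupLaw {i j : σ} (hij : i ≠ j)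
    (f : PowerSeries R) (m : ℕ) :
    coeff (single i 1 + single j m) (substMv (mulFormalGroupLaw i j : MvPowerSeries σ R) f) =
      (m + 1) * PowerSeries.coeff (m + 1) f + m * PowerSeries.coeff m f := by
  rw [coeff_substMv, map_add, degree_single, degree_single, add_comm 1 m,
    Finset.sum_range_succ, Finset.sum_range_succ, Finset.sum_eq_zero]
  · simp [coeff_single_add_single_mulFormalGroupLaw_pow hij]
    ring
  · intro n hn
    rw [Finset.mem_range] at hn
    simp [coeff_single_add_single_mulFormalGroupLaw_pow hij, show n ≠ m + 1 by omega,
      show n ≠ m by omega]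

theorem coeff_succ_of_substMv_mulFormalGroupLaw {i j : σ} (hij : i ≠ j) {f : PowerSeries R}
    (hf : substMv (mulFormalGroupLaw i j : MvPowerSeries σ R) f =
      substMv (X i) f + substMv (X j) f + substMv (X i) f * substMv (X j) f)
    {m : ℕ} (hm : m ≠ 0) :
    (m + 1) * PowerSeries.coeff (m + 1) f + m * PowerSeries.coeff m f =
      PowerSeries.coeff 1 f * PowerSeries.coeff m f := by
  have h := congr(coeff (single i 1 + single j m) $hf)
  rwa [coeff_single_add_single_substMv_mulFormalGroupLaw hij, map_add, map_add,
    coeff_substMv_X_mul_substMv_X hij, coeff_substMv_X_eq_zero, coeff_substMv_X_eq_zero,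
    zero_add, zero_add] at h
  · intro n h
    simpa [hij] using DFunLike.congr_fun h i
  · intro n h
    simpa [hij.symm, hm] using DFunLike.congr_fun h j

end MvPowerSeries

/-- Let `K` be a field of characteristic zero and `f ∈ K[[T]]` a power series with
zero constant term which is an endomorphism of the multiplicative formal group, i.e.
`f(X + Y + XY) = f(X) + f(Y) + f(X)·f(Y)` in `K[[X,Y]]`, and whose coefficient of `T`
equals `1`.  Then `f = T`: every normalized endomorphism of the formal multiplicative
group over a field of characteristic zero is the identity. -/
theorem mulFormalGroup_normalized_end_eq_id {K : Type*} [Field K] [CharZero K]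
    (f : PowerSeries K)
    (h0 : PowerSeries.constantCoeff f = 0)
    (h1 : PowerSeries.coeff 1 f = 1)
    (hf : PowerSeries.substMv
            (MvPowerSeries.X 0 + MvPowerSeries.X 1 +
              MvPowerSeries.X 0 * MvPowerSeries.X 1 : MvPowerSeries (Fin 2) K) f
          = PowerSeries.substMv (MvPowerSeries.X 0 : MvPowerSeries (Fin 2) K) f
            + PowerSeries.substMv (MvPowerSeries.X 1 : MvPowerSeries (Fin 2) K) f
            + PowerSeries.substMv (MvPowerSeries.X 0 : MvPowerSeries (Fin 2) K) f
              * PowerSeries.substMv (MvPowerSeries.X 1 : MvPowerSeries (Fin 2) K) f) :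
    f = PowerSeries.X := by
  have hrec (m : ℕ) (hm : m ≠ 0) :
      (m + 1) * PowerSeries.coeff (m + 1) f + m * PowerSeries.coeff m f =
        PowerSeries.coeff m f := by
    simpa [h1] using
      MvPowerSeries.coeff_succ_of_substMv_mulFormalGroupLaw (by decide : (0 : Fin 2) ≠ 1) hf hm
  have hvanish (n : ℕ) (hn : 2 ≤ n) : PowerSeries.coeff n f = 0 := by
    induction n, hn using Nat.le_induction with
    | base => simpa using hrec 1 one_ne_zero
    | succ n _ ih => simpa [ih, Nat.cast_add_one_ne_zero] using hrec n (by omega)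
  ext n
  rcases n with _ | _ | n
  · simpa using h0
  · simpa using h1
  · simp [hvanish (n + 2) (by omega), PowerSeries.coeff_X]
end

section
/- Let R be a commutative ring and a, b ∈ R. Then there exists a unique formal power series w ∈ R[[t]] with zero constant coefficient satisfying the equation w = t³ + a·t·w² + b·w³ in R[[t]]. Moreover this w has vanishing coefficients in degrees 1 and 2 and coefficient 1 in degree 3, i.e., w = t³·(1 + A₁t + A₂t² + ⋯) for suitable A_i ∈ R. -/
/-!
Writing `w = X·v` (which is exactly the condition `constantCoeff w = 0`) and cancelling `X`, the
equation becomes the fixed-point equation `v = X²·(1 + a·v² + b·v³)`. The right-hand side is a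
contraction for the `X`-adic metric: if `X^n ∣ u - v` then `X^(n+2)` divides the difference of the
images. Iterating from `0` gives an `X`-adically convergent sequence, whose limit is the unique
fixed point. Finally `w = X³·(1 + a·v² + b·v³)` with `v` divisible by `X²`, so `w ≡ X³ mod X⁴`.
-/

open PowerSeries Function

namespace PowerSeries

variable {R : Type*} [CommRing R]

theorem eq_of_forall_X_pow_dvd_sub {u v : R⟦X⟧} (h : ∀ n, X ^ n ∣ u - v) : u = v := by
  refine sub_eq_zero.mp (ext fun k => ?_)
  simpa using X_pow_dvd_iff.mp (h (k + 1)) k k.lt_succ_self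

theorem X_pow_dvd_sub_of_le {s : ℕ → R⟦X⟧} (hs : ∀ n, X ^ n ∣ s (n + 1) - s n) {n m : ℕ}
    (hnm : n ≤ m) : X ^ n ∣ s m - s n := by
  induction m, hnm using Nat.le_induction with
  | base => simp
  | succ m hnm ih =>
    rw [← sub_add_sub_cancel]
    exact dvd_add ((pow_dvd_pow X hnm).trans (hs m)) ih

theorem exists_forall_X_pow_dvd_sub {s : ℕ → R⟦X⟧} (hs : ∀ n, X ^ n ∣ s (n + 1) - s n) :
    ∃ L, ∀ n, X ^ n ∣ L - s n := by
  refine ⟨mk fun k => coeff k (s (k + 1)), fun n => X_pow_dvd_iff.mpr fun k hk => ?_⟩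
  have hstable := X_pow_dvd_iff.mp (X_pow_dvd_sub_of_le hs (Nat.succ_le_of_lt hk)) k k.lt_succ_self
  rw [map_sub, sub_eq_zero] at hstable
  simp [hstable]

theorem existsUnique_isFixedPt_of_X_pow_dvd {F : R⟦X⟧ → R⟦X⟧}
    (hF : ∀ n u v, X ^ n ∣ u - v → X ^ (n + 1) ∣ F u - F v) : ∃! u, IsFixedPt F u := by
  have hiter : ∀ n, X ^ n ∣ F^[n + 1] 0 - F^[n] 0 := by
    intro n
    induction n with
    | zero => simp
    | succ n ih =>
      simpa only [iterate_succ_apply'] using hF n _ _ ih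
  obtain ⟨L, hL⟩ := exists_forall_X_pow_dvd_sub (s := fun n => F^[n] 0) hiter
  have hfix : IsFixedPt F L := by
    refine eq_of_forall_X_pow_dvd_sub fun n => (pow_dvd_pow X n.le_succ).trans ?_
    have h := dvd_sub (hF n _ _ (hL n)) (hL (n + 1))
    rwa [iterate_succ_apply', sub_sub_sub_cancel_right] at h
  refine ⟨L, hfix, fun u hu => eq_of_forall_X_pow_dvd_sub fun n => ?_⟩
  induction n with
  | zero => simp
  | succ n ih => simpa only [hu.eq, hfix.eq] using hF n u L ih

end PowerSeries

namespace WeierstrassFormalExpansion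

variable {R : Type*} [CommRing R]

noncomputable def step (a b : R) (v : R⟦X⟧) : R⟦X⟧ :=
  X ^ 2 * (1 + C a * v ^ 2 + C b * v ^ 3)

theorem X_pow_succ_dvd_step_sub (a b : R) (n : ℕ) (u v : R⟦X⟧) (h : X ^ n ∣ u - v) :
    X ^ (n + 1) ∣ step a b u - step a b v := by
  have hfactor : step a b u - step a b v
      = X ^ 2 * (u - v) * (C a * (u + v) + C b * (u ^ 2 + u * v + v ^ 2)) := by
    simp only [step]; ring
  rw [hfactor, pow_succ']
  exact (mul_dvd_mul (dvd_pow_self X two_ne_zero) h).mul_right _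

theorem X_mul_eq_iff_isFixedPt_step (a b : R) (v : R⟦X⟧) :
    X * v = X ^ 3 + C a * X * (X * v) ^ 2 + C b * (X * v) ^ 3 ↔ IsFixedPt (step a b) v := by
  rw [show X ^ 3 + C a * X * (X * v) ^ 2 + C b * (X * v) ^ 3 = X * step a b v by
    simp only [step]; ring, X_mul_injective.eq_iff, IsFixedPt, eq_comm]

theorem coeff_X_mul_of_isFixedPt_step {a b : R} {v : R⟦X⟧} (hv : IsFixedPt (step a b) v) :
    coeff 1 (X * v) = 0 ∧ coeff 2 (X * v) = 0 ∧ coeff 3 (X * v) = 1 := by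
  have hv₀ : constantCoeff v = 0 := by
    rw [← hv.eq]; simp [step]
  rw [← hv.eq]
  simp [step, coeff_X_pow_mul', hv₀]

end WeierstrassFormalExpansion

open WeierstrassFormalExpansion in
/-- Over any commutative ring `R`, for `a, b ∈ R` there is a unique formal power series
`w ∈ R[[t]]` with zero constant coefficient satisfying `w = t³ + a·t·w² + b·w³`;
moreover this `w` has vanishing coefficients in degrees `1` and `2` and coefficient `1`
in degree `3`, i.e. `w = t³·(1 + A₁t + A₂t² + ⋯)`.  (This is the formal expansion at
the origin of an elliptic curve `ỹ = x̃³ + (g₂/4)·x̃·ỹ² + (g₃/4)·ỹ³`, the first step in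
constructing the formal group `Ê`.) -/
theorem existsUnique_weierstrass_formal_expansion {R : Type*} [CommRing R] (a b : R) :
    (∃! w : PowerSeries R, PowerSeries.constantCoeff w = 0 ∧
        w = PowerSeries.X ^ 3 + PowerSeries.C a * PowerSeries.X * w ^ 2
            + PowerSeries.C b * w ^ 3) ∧
      ∀ w : PowerSeries R, PowerSeries.constantCoeff w = 0 →
        w = PowerSeries.X ^ 3 + PowerSeries.C a * PowerSeries.X * w ^ 2
            + PowerSeries.C b * w ^ 3 →
        PowerSeries.coeff 1 w = 0 ∧ PowerSeries.coeff 2 w = 0 ∧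
          PowerSeries.coeff 3 w = 1 := by
  obtain ⟨v₀, hv₀, hunique⟩ := existsUnique_isFixedPt_of_X_pow_dvd (X_pow_succ_dvd_step_sub a b)
  refine ⟨⟨X * v₀, ⟨by simp, (X_mul_eq_iff_isFixedPt_step a b v₀).2 hv₀⟩, ?_⟩, ?_⟩
  · rintro w ⟨hw₀, hw⟩
    obtain ⟨v, rfl⟩ := X_dvd_iff.2 hw₀
    rw [hunique v ((X_mul_eq_iff_isFixedPt_step a b v).1 hw)]
  · rintro w hw₀ hw
    obtain ⟨v, rfl⟩ := X_dvd_iff.2 hw₀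
    exact coeff_X_mul_of_isFixedPt_step ((X_mul_eq_iff_isFixedPt_step a b v).1 hw)
end

section
/- Let R be a commutative ring, λ ∈ R, and m ∈ ℕ. In the polynomial ring R[X], the coefficient of X^{2m} in the polynomial (X·(X−1)·(X−λ))^m equals (−1)^m · ∑_{i=0}^{m} binom(m,i)² · λ^i. -/
open Polynomial Finset

section

variable {R : Type*} [CommRing R]

theorem coeff_X_add_C_pow_mul_X_add_C_pow (a b : R) (m : ℕ) :
    ((X + C a) ^ m * (X + C b) ^ m).coeff m
      = ∑ i ∈ range (m + 1), (m.choose i : R) ^ 2 * a ^ (m - i) * b ^ i := by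
  rw [coeff_mul, Nat.sum_antidiagonal_eq_sum_range_succ_mk]
  refine sum_congr rfl fun i hi => ?_
  have hi : i ≤ m := Nat.lt_succ_iff.mp (mem_range.mp hi)
  rw [coeff_X_add_C_pow, coeff_X_add_C_pow, Nat.sub_sub_self hi, Nat.choose_symm hi]
  ring

theorem coeff_X_sub_C_pow_mul_X_sub_C_pow (a b : R) (m : ℕ) :
    ((X - C a) ^ m * (X - C b) ^ m).coeff m
      = (-1) ^ m * ∑ i ∈ range (m + 1), (m.choose i : R) ^ 2 * a ^ (m - i) * b ^ i := by
  simp only [sub_eq_add_neg, ← map_neg C, coeff_X_add_C_pow_mul_X_add_C_pow, mul_sum]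
  refine sum_congr rfl fun i hi => ?_
  have hi : i ≤ m := Nat.lt_succ_iff.mp (mem_range.mp hi)
  have hsign : (-1 : R) ^ (m - i) * (-1) ^ i = (-1) ^ m := by
    rw [← pow_add, Nat.sub_add_cancel hi]
  rw [neg_pow a, neg_pow b, ← hsign]
  ring

end

/-- For a commutative ring `R`, `λ ∈ R` and `m ∈ ℕ`, the coefficient of `X^(2m)` in
`(X·(X−1)·(X−λ))^m ∈ R[X]` equals `(−1)^m · ∑_{i=0}^{m} (m choose i)² · λⁱ`.
(This identity underlies Hasse's supersingularity criterion for the elliptic curve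
`y² = x(x−1)(x−λ)` in characteristic `p`, with `m = (p−1)/2`.) -/
theorem coeff_two_mul_hasse_polynomial {R : Type*} [CommRing R] (lam : R) (m : ℕ) :
    ((X * (X - 1) * (X - C lam)) ^ m).coeff (2 * m)
      = (-1) ^ m * ∑ i ∈ Finset.range (m + 1), ((m.choose i : R)) ^ 2 * lam ^ i := by
  have hfactor : (X * (X - 1) * (X - C lam)) ^ m
      = X ^ m * ((X - C 1) ^ m * (X - C lam) ^ m) := by
    rw [map_one, mul_pow, mul_pow, mul_assoc]
  rw [hfactor, two_mul, coeff_X_pow_mul', if_pos le_add_self, Nat.add_sub_cancel,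
    coeff_X_sub_C_pow_mul_X_sub_C_pow]
  simp only [one_pow, mul_one]
end

section
/- Let 𝔽 be an infinite field and let B be a nontrivial commutative 𝔽-algebra. Let f ∈ B[[T]] be a power series with zero constant term whose coefficient of T equals 1. Suppose that for every a ∈ 𝔽 there exists a power series φ_a ∈ B[[T]] with zero constant term, whose coefficient of T equals the image of a in B, such that f(φ_a(T)) = φ_a(f(T)). Then f = T. -/
/-- Substitution of a power series `g` (intended to have zero constant coefficient)
into a one-variable power series `f`, i.e. `f(g) = ∑ₙ (coeffₙ f) · gⁿ`.  Each
coefficient of the result is given by the finite truncated sum, which agrees with the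
genuine substitution whenever `g` has zero constant coefficient. -/
noncomputable def PowerSeries.substPS {R : Type*} [CommRing R]
    (g f : PowerSeries R) : PowerSeries R :=
  PowerSeries.mk fun d => ∑ n ∈ Finset.range (d + 1),
    PowerSeries.coeff n f * PowerSeries.coeff d (g ^ n)

/-!
If `f ≠ X`, write `f = X + c Xⁿ + O(Xⁿ⁺¹)` with `n ≥ 2` and `c ≠ 0`. Since `fᵏ ≡ Xᵏ` modulo
`X^(n+k-1)`, the coefficient of `Xⁿ` in `f(φ) = φ(f)` reads `φₙ + c aⁿ = a c + φₙ`, where `a` is the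
linear coefficient of `φ`. So `c (aⁿ - a) = 0`; as `𝔽` is infinite, some `a` has `aⁿ ≠ a`, and then
`aⁿ - a` is a unit of `B`.
-/

theorem pow_add_dvd_pow_succ_sub_pow_succ_s11 {R : Type*} [CommRing R] {x y : R} {n : ℕ}
    (hy : x ∣ y) (h : x ^ n ∣ y - x) (k : ℕ) :
    x ^ (n + k) ∣ y ^ (k + 1) - x ^ (k + 1) := by
  induction k with
  | zero => simpa using h
  | succ k ih =>
    have hsplit : y ^ (k + 2) - x ^ (k + 2) =
        y * (y ^ (k + 1) - x ^ (k + 1)) + x ^ (k + 1) * (y - x) := by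
      ring
    rw [hsplit]
    refine dvd_add ?_ ?_
    · rw [← add_assoc, pow_succ']
      exact mul_dvd_mul hy ih
    · rw [add_comm n, pow_add]
      exact mul_dvd_mul_left _ h

theorem exists_pow_ne_self {F : Type*} [CommRing F] [IsDomain F] [Infinite F] {n : ℕ}
    (hn : n ≠ 1) : ∃ a : F, a ^ n ≠ a := by
  by_contra! h
  have hX : (Polynomial.X ^ n : Polynomial F) = Polynomial.X :=
    Polynomial.funext fun a => by simpa using h a
  apply hn
  simpa using congrArg Polynomial.natDegree hX

namespace PowerSeries

variable {R : Type*} [CommRing R]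

theorem coeff_pow_self_of_constantCoeff_eq_zero {φ : R⟦X⟧} (hφ : constantCoeff φ = 0)
    (n : ℕ) : coeff n (φ ^ n) = coeff 1 φ ^ n := by
  obtain ⟨u, rfl⟩ := X_dvd_iff.mpr hφ
  rw [mul_pow, coeff_X_pow_mul', if_pos le_rfl, Nat.sub_self, coeff_zero_eq_constantCoeff,
    map_pow, ← zero_add 1, coeff_succ_X_mul, coeff_zero_eq_constantCoeff]

theorem exists_X_pow_dvd_sub_X_of_ne_X {f : R⟦X⟧} (h0 : constantCoeff f = 0)
    (h1 : coeff 1 f = 1) (hne : f ≠ X) :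
    ∃ n, 2 ≤ n ∧ X ^ n ∣ f - X ∧ coeff n f ≠ 0 := by
  obtain ⟨n, hn⟩ := ENat.ne_top_iff_exists.mp (order_eq_top.not.mpr (sub_ne_zero.mpr hne))
  obtain ⟨hcoeff, hlow⟩ := order_eq_nat.mp hn.symm
  have h2 : 2 ≤ n := by
    by_contra
    interval_cases n <;> simp [coeff_zero_eq_constantCoeff_apply, h0, h1] at hcoeff
  refine ⟨n, h2, X_pow_dvd_iff.mpr hlow, ?_⟩
  simpa [coeff_X, show n ≠ 1 by omega] using hcoeff

section X_pow_dvd_sub_X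

variable {f : R⟦X⟧} {n : ℕ}

theorem coeff_eq_coeff_X_of_X_pow_dvd_sub_X (hf : X ^ n ∣ f - X) {k : ℕ} (hk : k < n) :
    coeff k f = coeff k X :=
  sub_eq_zero.mp <| by rw [← map_sub]; exact X_pow_dvd_iff.mp hf k hk

theorem coeff_pow_of_X_pow_dvd_sub_X (hf : X ^ n ∣ f - X) (hn : 1 ≤ n) {k : ℕ} (hk : 2 ≤ k) :
    coeff n (f ^ k) = coeff n (X ^ k) := by
  have hX : X ∣ f := by
    simpa using dvd_add ((dvd_pow_self X (by omega)).trans hf) (dvd_refl X)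
  obtain ⟨j, rfl⟩ := Nat.exists_eq_add_of_le' hk
  have hd := pow_add_dvd_pow_succ_sub_pow_succ_s11 hX hf (j + 1)
  exact sub_eq_zero.mp <| by rw [← map_sub]; exact X_pow_dvd_iff.mp hd n (by omega)

theorem coeff_substPS_of_X_pow_dvd_sub_X_right {φ : R⟦X⟧} (hφ : constantCoeff φ = 0)
    (hf : X ^ n ∣ f - X) (hn : 2 ≤ n) :
    coeff n (substPS φ f) = coeff n φ + coeff n f * coeff 1 φ ^ n := by
  rw [substPS, coeff_mk, Finset.sum_eq_add 1 n (by omega)]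
  · rw [coeff_eq_coeff_X_of_X_pow_dvd_sub_X hf (by omega), coeff_one_X, one_mul, pow_one,
      coeff_pow_self_of_constantCoeff_eq_zero hφ]
  · intro k hk ⟨hk1, _⟩
    rw [coeff_eq_coeff_X_of_X_pow_dvd_sub_X hf (by grind), coeff_X, if_neg hk1, zero_mul]
  · exact fun h => (h (Finset.mem_range.mpr (by omega))).elim
  · exact fun h => (h (Finset.self_mem_range_succ n)).elim

theorem coeff_substPS_of_X_pow_dvd_sub_X_left (φ : R⟦X⟧) (hf : X ^ n ∣ f - X) (hn : 2 ≤ n) :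
    coeff n (substPS f φ) = coeff 1 φ * coeff n f + coeff n φ := by
  rw [substPS, coeff_mk, Finset.sum_eq_add 1 n (by omega)]
  · rw [pow_one, coeff_pow_of_X_pow_dvd_sub_X hf (by omega) hn, coeff_X_pow_self, mul_one]
  · intro k _ ⟨hk1, hkn⟩
    rcases Nat.lt_or_ge k 2 with hk | hk
    · obtain rfl : k = 0 := by omega
      rw [pow_zero, coeff_one, if_neg (by omega), mul_zero]
    · rw [coeff_pow_of_X_pow_dvd_sub_X hf (by omega) hk, coeff_X_pow, if_neg (Ne.symm hkn),
        mul_zero]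
  · exact fun h => (h (Finset.mem_range.mpr (by omega))).elim
  · exact fun h => (h (Finset.self_mem_range_succ n)).elim

end X_pow_dvd_sub_X

end PowerSeries

open PowerSeries

theorem rigidity_of_commuting_powerSeries_general {F B : Type*} [Field F] [Infinite F]
    [CommRing B] [Algebra F B]
    (f : PowerSeries B)
    (h0 : PowerSeries.constantCoeff f = 0)
    (h1 : PowerSeries.coeff 1 f = 1)
    (hcomm : ∀ a : F, ∃ φ : PowerSeries B,
      PowerSeries.constantCoeff φ = 0 ∧
      PowerSeries.coeff 1 φ = algebraMap F B a ∧
      PowerSeries.substPS φ f = PowerSeries.substPS f φ) :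
    f = PowerSeries.X := by
  by_contra hne
  obtain ⟨n, hn, hf, hc⟩ := exists_X_pow_dvd_sub_X_of_ne_X h0 h1 hne
  obtain ⟨a, ha⟩ := exists_pow_ne_self (F := F) (by omega : n ≠ 1)
  obtain ⟨φ, hφ0, hφ1, hsub⟩ := hcomm a
  have key := congrArg (coeff n) hsub
  rw [coeff_substPS_of_X_pow_dvd_sub_X_right hφ0 hf hn,
    coeff_substPS_of_X_pow_dvd_sub_X_left φ hf hn, hφ1] at key
  have hunit : IsUnit (algebraMap F B (a ^ n - a)) :=
    (isUnit_iff_ne_zero.mpr (sub_ne_zero.mpr ha)).map _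
  refine hc (hunit.mul_left_eq_zero.mp ?_)
  rw [map_sub, map_pow]
  linear_combination key

/-- Rigidity underlying Lemma 3.4.6: let `𝔽` be an infinite field, `B` a nontrivial
commutative `𝔽`-algebra, and `f ∈ B[[T]]` a power series with zero constant term and
linear coefficient `1`.  If for every `a ∈ 𝔽` there is a power series `φ_a ∈ B[[T]]`
with zero constant term and linear coefficient (the image of) `a` such that
`f(φ_a(T)) = φ_a(f(T))`, then `f = T`. -/
theorem rigidity_of_commuting_powerSeries {F B : Type*} [Field F] [Infinite F]
    [CommRing B] [Nontrivial B] [Algebra F B]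
    (f : PowerSeries B)
    (h0 : PowerSeries.constantCoeff f = 0)
    (h1 : PowerSeries.coeff 1 f = 1)
    (hcomm : ∀ a : F, ∃ φ : PowerSeries B,
      PowerSeries.constantCoeff φ = 0 ∧
      PowerSeries.coeff 1 φ = algebraMap F B a ∧
      PowerSeries.substPS φ f = PowerSeries.substPS f φ) :
    f = PowerSeries.X :=
  rigidity_of_commuting_powerSeries_general f h0 h1 hcomm
end
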